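/- Let (X,d) be a semimetric space. Then (X,d) belongs to the class UBPP if and only if every subspace (Y, d restricted to Y×Y) with Y ⊆ X and |Y| ≤ 4 belongs to the class UBPP. -/

import Mathlib

open Set

universe u v

/-- A semimetric on `X`: a symmetric, nonnegative function vanishing exactly on the diagonal. -/
def IsSemimetric {X : Type u} (d : X → X → ℝ) : Prop :=
  (∀ x y, 0 ≤ d x y) ∧ (∀ x y, d x y = d y x) ∧ (∀ x y, d x y = 0 ↔ x = y)

/-- A metric: a semimetric satisfying the triangle inequality. -/
def IsMetricD {X : Type u} (d : X → X → ℝ) : Prop :=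
  IsSemimetric d ∧ ∀ x y z, d x y ≤ d x z + d z y

/-- An ultrametric: a semimetric satisfying the strong triangle inequality. -/
def IsUltrametricD {X : Type u} (d : X → X → ℝ) : Prop :=
  IsSemimetric d ∧ ∀ x y z, d x y ≤ max (d x z) (d z y)

/-- `sDist d A B = inf {d a b : a ∈ A, b ∈ B}`. -/
noncomputable def sDist {X : Type u} (d : X → X → ℝ) (A B : Set X) : ℝ :=
  sInf {r | ∃ a ∈ A, ∃ b ∈ B, d a b = r}

/-- `pDist d x A = inf {d x a : a ∈ A}`. -/
noncomputable def pDist {X : Type u} (d : X → X → ℝ) (x : X) (A : Set X) : ℝ :=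
  sInf {r | ∃ a ∈ A, d x a = r}

/-- `A` is proximinal: every point of `X` has a best approximation in `A`. -/
def Proximinal {X : Type u} (d : X → X → ℝ) (A : Set X) : Prop :=
  ∀ x : X, ∃ a ∈ A, d x a = pDist d x A

/-- Strong rigidity: distinct pairs of distinct points have distinct distances. -/
def StronglyRigid {X : Type u} (d : X → X → ℝ) : Prop :=
  ∀ x y u v : X, x ≠ y → d x y = d u v → ({x, y} : Set X) = {u, v}

/-- Strong rigidity of the subspace `S`. -/
def StronglyRigidOn {X : Type u} (d : X → X → ℝ) (S : Set X) : Prop :=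
  ∀ x ∈ S, ∀ y ∈ S, ∀ u ∈ S, ∀ v ∈ S, x ≠ y → d x y = d u v → ({x, y} : Set X) = {u, v}

/-- Weak rigidity: every three-point subspace is strongly rigid. -/
def WeaklyRigid {X : Type u} (d : X → X → ℝ) : Prop :=
  ∀ S : Set X, S.encard = 3 → StronglyRigidOn d S

/-- The class UBPP: any two disjoint proximinal subsets admit at most one best proximity pair. -/
def UBPP {X : Type u} (d : X → X → ℝ) : Prop :=
  ∀ A B : Set X, Disjoint A B → Proximinal d A → Proximinal d B →
    ∀ a₁ ∈ A, ∀ b₁ ∈ B, ∀ a₂ ∈ A, ∀ b₂ ∈ B,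
      d a₁ b₁ = sDist d A B → d a₂ b₂ = sDist d A B → a₁ = a₂ ∧ b₁ = b₂

/-- `D(X)`: the set of all nonzero distances. -/
def DistSet {X : Type u} (d : X → X → ℝ) : Set ℝ :=
  {r | ∃ x y : X, x ≠ y ∧ d x y = r}

/-- The unordered pairs of distinct points whose distance is `r`. -/
def PairsAt {X : Type u} (d : X → X → ℝ) (r : ℝ) : Set (Set X) :=
  {s | ∃ x y : X, x ≠ y ∧ d x y = r ∧ s = {x, y}}

/-- All distances between distinct unordered pairs of distinct points are pairwise distinct. -/
def AllDistinct {X : Type u} (d : X → X → ℝ) : Prop :=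
  ∀ x y u v : X, x ≠ y → u ≠ v → d x y = d u v → ({x, y} : Set X) = {u, v}

/-- A weak similarity of `(X,d)` and `(Y,ρ)`. -/
def WeakSimilarity {X : Type u} {Y : Type v} (d : X → X → ℝ) (ρ : Y → Y → ℝ)
    (Φ : X → Y) : Prop :=
  Function.Bijective Φ ∧ ∃ ψ : ℝ → ℝ, Set.BijOn ψ (DistSet ρ) (DistSet d) ∧
    StrictMonoOn ψ (DistSet ρ) ∧ ∀ x y : X, x ≠ y → d x y = ψ (ρ (Φ x) (Φ y))

/-- The four-point semimetric space `(X*, ρ*)` of Example 3.4, with points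
`a₁ = 0, a₂ = 1, b₁ = 2, b₂ = 3`. -/
noncomputable def rhoStar : Fin 4 → Fin 4 → ℝ := fun i j =>
  !![(0 : ℝ), 5, 3, 1; 5, 0, 2, 3; 3, 2, 0, 4; 1, 3, 4, 0] i j

/-- The restriction of a semimetric to the subspace `Y`. -/
def restrictS {X : Type u} (d : X → X → ℝ) (Y : Set X) : ↥Y → ↥Y → ℝ :=
  fun a b => d a.1 b.1

/-- The condition that the digraph `Di_Y` of a four-point space is isomorphic to one of
`Di¹, Di², Di³, Di⁴`: either all six distances are pairwise distinct, or there are exactly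
five distance values, exactly one of which is attained by exactly two unordered pairs,
each other value by exactly one pair, and the repeated value has at least two values below it. -/
def DiOK {X : Type u} (d : X → X → ℝ) : Prop :=
  AllDistinct d ∨
    ((DistSet d).ncard = 5 ∧ ∃ c ∈ DistSet d,
      (PairsAt d c).ncard = 2 ∧
      (∀ r ∈ DistSet d, r ≠ c → (PairsAt d r).ncard = 1) ∧
      2 ≤ ({r ∈ DistSet d | r < c}).ncard)

lemma finite_proximinal {Z : Type v} (d : Z → Z → ℝ) (h0 : ∀ x y, 0 ≤ d x y) (A : Set Z)
    (hfin : A.Finite) (hne : A.Nonempty) : Proximinal d A := by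
  intro x
  obtain ⟨a, haA, hmin⟩ := Set.exists_min_image A (fun a => d x a) hfin hne
  have hbdd : BddBelow {r | ∃ a ∈ A, d x a = r} := ⟨0, by rintro r ⟨a', _, rfl⟩; exact h0 x a'⟩
  have hmem : d x a ∈ {r | ∃ a ∈ A, d x a = r} := ⟨a, haA, rfl⟩
  have hnest : ({r | ∃ a ∈ A, d x a = r}).Nonempty := ⟨d x a, hmem⟩
  refine ⟨a, haA, le_antisymm ?_ (csInf_le hbdd hmem)⟩
  refine le_csInf hnest ?_
  rintro r ⟨a', ha', rfl⟩; exact hmin a' ha'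

lemma sDist_le {Z : Type v} (d : Z → Z → ℝ) (h0 : ∀ x y, 0 ≤ d x y) {A B : Set Z} {a b : Z}
    (ha : a ∈ A) (hb : b ∈ B) : sDist d A B ≤ d a b := by
  have hbdd : BddBelow {r | ∃ a ∈ A, ∃ b ∈ B, d a b = r} :=
    ⟨0, by rintro r ⟨a', _, b', _, rfl⟩; exact h0 a' b'⟩
  exact csInf_le hbdd ⟨a, ha, b, hb, rfl⟩

lemma sDist_pair {Z : Type v} (d : Z → Z → ℝ) (h0 : ∀ x y, 0 ≤ d x y) (a1 a2 b1 b2 : Z)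
    (h12 : d a1 b1 ≤ d a1 b2) (h21 : d a1 b1 ≤ d a2 b1) (h22 : d a1 b1 ≤ d a2 b2) :
    sDist d {a1, a2} {b1, b2} = d a1 b1 := by
  refine le_antisymm (sDist_le d h0 (Set.mem_insert _ _) (Set.mem_insert _ _)) ?_
  have hnest : ({r | ∃ a ∈ ({a1, a2} : Set Z), ∃ b ∈ ({b1, b2} : Set Z), d a b = r}).Nonempty :=
    ⟨d a1 b1, a1, Set.mem_insert _ _, b1, Set.mem_insert _ _, rfl⟩
  refine le_csInf hnest ?_
  rintro r ⟨a, ha, b, hb, rfl⟩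
  rcases ha with rfl | ha <;> rcases hb with rfl | hb
  · exact le_refl _
  · rcases hb with rfl; exact h12
  · rcases ha with rfl; exact h21
  · rcases ha with rfl; rcases hb with rfl; exact h22

/-- A semimetric space belongs to UBPP iff every subspace with at most four
points belongs to UBPP. -/
theorem stmt_17 {X : Type u} [Nonempty X] (d : X → X → ℝ) (hd : IsSemimetric d) :
    UBPP d ↔ ∀ Y : Set X, Y.encard ≤ 4 → UBPP (restrictS d Y) := by
  obtain ⟨h0, -, -⟩ := hd
  constructor
  · -- forward
    intro hU Y _ A B hAB hPA hPB a1 ha1 b1 hb1 a2 ha2 b2 hb2 h1 h2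
    set d' := restrictS d Y with hd'
    have h0' : ∀ x y : ↥Y, 0 ≤ d' x y := fun x y => h0 x.1 y.1
    have hkey : ∀ a ∈ A, ∀ b ∈ B, d' a1 b1 ≤ d' a b := fun a ha b hb =>
      h1 ▸ sDist_le d' h0' ha hb
    have hne : ∀ (a : ↥Y), a ∈ A → ∀ (b : ↥Y), b ∈ B → a.1 ≠ b.1 := by
      intro a ha b hb hEq
      exact (Set.disjoint_left.mp hAB ha) (Subtype.ext hEq ▸ hb)
    have hsd : sDist d ({a1.1, a2.1}) ({b1.1, b2.1}) = d a1.1 b1.1 :=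
      sDist_pair d h0 _ _ _ _ (hkey a1 ha1 b2 hb2) (hkey a2 ha2 b1 hb1) (hkey a2 ha2 b2 hb2)
    have h22 : d a2.1 b2.1 = d a1.1 b1.1 := h2.trans h1.symm
    have := hU {a1.1, a2.1} {b1.1, b2.1}
      (by rw [Set.disjoint_left]
          rintro x (rfl | rfl) (h | h) <;>
            first
              | exact hne a1 ha1 b1 hb1 h | exact hne a1 ha1 b2 hb2 h
              | exact hne a2 ha2 b1 hb1 h | exact hne a2 ha2 b2 hb2 h)
      (finite_proximinal d h0 _ ((Set.finite_singleton _).insert _) ⟨a1.1, Set.mem_insert _ _⟩)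
      (finite_proximinal d h0 _ ((Set.finite_singleton _).insert _) ⟨b1.1, Set.mem_insert _ _⟩)
      a1.1 (by simp) b1.1 (by simp) a2.1 (by simp) b2.1 (by simp) hsd.symm (h22.trans hsd.symm)
    exact ⟨Subtype.ext this.1, Subtype.ext this.2⟩
  · -- backward
    intro h A B hAB hPA hPB a1 ha1 b1 hb1 a2 ha2 b2 hb2 h1 h2
    set Y : Set X := {a1, a2, b1, b2} with hY
    have hYcard : Y.encard ≤ 4 := by
      refine le_trans (Set.encard_insert_le _ _) ?_
      refine le_trans (add_le_add_left (Set.encard_insert_le _ _) 1) ?_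
      refine le_trans (add_le_add_left (add_le_add_left (Set.encard_insert_le _ _) 1) 1) ?_
      rw [Set.encard_singleton]; decide
    have hUY := h Y hYcard
    have ma1 : a1 ∈ Y := by simp [hY]
    have ma2 : a2 ∈ Y := by simp [hY]
    have mb1 : b1 ∈ Y := by simp [hY]
    have mb2 : b2 ∈ Y := by simp [hY]
    set d' := restrictS d Y with hd'
    have h0' : ∀ x y : ↥Y, 0 ≤ d' x y := fun x y => h0 x.1 y.1
    have hkey : ∀ a ∈ A, ∀ b ∈ B, d a1 b1 ≤ d a b := fun a ha b hb =>
      h1 ▸ sDist_le d h0 ha hb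
    have h22 : d a2 b2 = d a1 b1 := h2.trans h1.symm
    have hne : ∀ a ∈ A, ∀ b ∈ B, a ≠ b := by
      intro a ha b hb hEq
      exact (Set.disjoint_left.mp hAB ha) (hEq ▸ hb)
    set A' : Set ↥Y := {⟨a1, ma1⟩, ⟨a2, ma2⟩} with hA'
    set B' : Set ↥Y := {⟨b1, mb1⟩, ⟨b2, mb2⟩} with hB'
    have hsd : sDist d' A' B' = d' ⟨a1, ma1⟩ ⟨b1, mb1⟩ :=
      sDist_pair d' h0' _ _ _ _ (hkey a1 ha1 b2 hb2) (hkey a2 ha2 b1 hb1) (hkey a2 ha2 b2 hb2)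
    have := hUY A' B'
      (by rw [Set.disjoint_left]
          rintro x (rfl | rfl) (h | h) <;>
            first
              | exact hne a1 ha1 b1 hb1 (congrArg Subtype.val h)
              | exact hne a1 ha1 b2 hb2 (congrArg Subtype.val h)
              | exact hne a2 ha2 b1 hb1 (congrArg Subtype.val h)
              | exact hne a2 ha2 b2 hb2 (congrArg Subtype.val h))
      (finite_proximinal d' h0' _ ((Set.finite_singleton _).insert _)
        ⟨⟨a1, ma1⟩, Set.mem_insert _ _⟩)
      (finite_proximinal d' h0' _ ((Set.finite_singleton _).insert _)
        ⟨⟨b1, mb1⟩, Set.mem_insert _ _⟩)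
      ⟨a1, ma1⟩ (Set.mem_insert _ _) ⟨b1, mb1⟩ (Set.mem_insert _ _)
      ⟨a2, ma2⟩ (Set.mem_insert_of_mem _ rfl) ⟨b2, mb2⟩ (Set.mem_insert_of_mem _ rfl)
      hsd.symm (h22.trans hsd.symm)
    exact ⟨congrArg Subtype.val this.1, congrArg Subtype.val this.2⟩
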